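/- arXiv:2303.16961 — 2 statements merged into one kernel-verified Lean document; each statement's English description precedes it below -/
import Mathlib

section
/- Let G be a group and let n ≥ 0. Suppose H and K are subgroups of G with H ≤ K, and both H and K are virtually ℤ^n (for the same n). Then H has finite index in K; in particular, H and K are commensurable. -/
/-!
Choose finite-index subgroups `A ≤ H` and `B ≤ K` isomorphic to `ℤⁿ`. Since `B` has finite
index in `K ⊇ A`, the intersection `A ⊓ B` has finite index in `A ≅ ℤⁿ`, so it is free abelian of
rank `n` again. A subgroup of `B ≅ ℤⁿ` of full rank has finite index (Smith normal form), so
`A ⊓ B`, and with it `H ⊇ A`, has finite index in `K`.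
-/

/-- A subgroup is *virtually ℤⁿ* if it has a finite-index subgroup isomorphic to the
free abelian group of rank `n`. -/
def IsVirtuallyZn {G : Type*} [Group G] (H : Subgroup G) (n : ℕ) : Prop :=
  ∃ V : Subgroup H, V.FiniteIndex ∧ Nonempty (V ≃* Multiplicative (Fin n → ℤ))

open Subgroup

section FreeAbelian

variable {ι : Type*} [Finite ι]

theorem Subgroup.index_ne_zero_iff_nonempty_mulEquiv {P : Type*} [Group P]
    (e : P ≃* Multiplicative (ι → ℤ)) {C : Subgroup P} :
    C.index ≠ 0 ↔ Nonempty (C ≃* Multiplicative (ι → ℤ)) := by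
  let f : P ≃* (ι → Multiplicative ℤ) := e.trans (MulEquiv.funMultiplicative ι ℤ)
  have eC : C ≃* C.map (f : P →* ι → Multiplicative ℤ) := f.subgroupMap C
  let em : (ι → Multiplicative ℤ) ≃* Multiplicative (ι → ℤ) :=
    (MulEquiv.funMultiplicative ι ℤ).symm
  rw [← index_map_equiv C f, Int.subgroup_index_ne_zero_iff]
  exact ⟨fun ⟨g⟩ ↦ ⟨(eC.trans g).trans em⟩, fun ⟨g⟩ ↦ ⟨(eC.symm.trans g).trans em.symm⟩⟩

variable {G : Type*} [Group G]

theorem Subgroup.relIndex_ne_zero_iff_nonempty_mulEquiv {C D : Subgroup G} (hCD : C ≤ D)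
    (e : D ≃* Multiplicative (ι → ℤ)) :
    C.relIndex D ≠ 0 ↔ Nonempty (C ≃* Multiplicative (ι → ℤ)) := by
  rw [relIndex, index_ne_zero_iff_nonempty_mulEquiv e]
  let eC := subgroupOfEquivOfLe hCD
  exact ⟨fun ⟨g⟩ ↦ ⟨eC.symm.trans g⟩, fun ⟨g⟩ ↦ ⟨eC.trans g⟩⟩

theorem Subgroup.relIndex_ne_zero_symm_of_mulEquiv {A B : Subgroup G}
    (eA : A ≃* Multiplicative (ι → ℤ)) (eB : B ≃* Multiplicative (ι → ℤ))
    (h : B.relIndex A ≠ 0) : A.relIndex B ≠ 0 := by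
  rw [← inf_relIndex_left] at h
  rw [← inf_relIndex_right, relIndex_ne_zero_iff_nonempty_mulEquiv inf_le_right eB]
  exact (relIndex_ne_zero_iff_nonempty_mulEquiv inf_le_left eA).mp h

end FreeAbelian

theorem IsVirtuallyZn.exists_le {G : Type*} [Group G] {H : Subgroup G} {n : ℕ}
    (hH : IsVirtuallyZn H n) :
    ∃ A ≤ H, A.relIndex H ≠ 0 ∧ Nonempty (A ≃* Multiplicative (Fin n → ℤ)) := by
  obtain ⟨V, hV, ⟨e⟩⟩ := hH
  refine ⟨V.map H.subtype, map_subtype_le V, ?_,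
    ⟨(V.equivMapOfInjective H.subtype H.subtype_injective).symm.trans e⟩⟩
  rw [relIndex, ← comap_subtype, comap_map_eq_self_of_injective H.subtype_injective]
  exact hV.index_ne_zero

theorem finiteIndex_of_le_of_virtuallyZn {G : Type*} [Group G] (n : ℕ)
    (H K : Subgroup G) (hHK : H ≤ K)
    (hH : IsVirtuallyZn H n) (hK : IsVirtuallyZn K n) :
    (H.subgroupOf K).FiniteIndex ∧ Subgroup.Commensurable H K := by
  obtain ⟨A, hAH, -, ⟨eA⟩⟩ := hH.exists_le
  obtain ⟨B, -, hBK, ⟨eB⟩⟩ := hK.exists_le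
  have hBA : B.relIndex A ≠ 0 := mt (relIndex_eq_zero_of_le_right (hAH.trans hHK)) hBK
  have hAK : A.relIndex K ≠ 0 :=
    relIndex_ne_zero_trans (relIndex_ne_zero_symm_of_mulEquiv eA eB hBA) hBK
  have hHK' : H.relIndex K ≠ 0 := mt (relIndex_eq_zero_of_le_left hAH) hAK
  exact ⟨⟨hHK'⟩, hHK', (relIndex_eq_one.mpr hHK).trans_ne one_ne_zero⟩
end

section
/- Let b ≥ 1 be a natural number and consider a central extension of groups 1 → ℤ^b → G →θ→ Q → 1, i.e. θ : G → Q is a surjective homomorphism whose kernel is central in G and isomorphic to the free abelian group ℤ^b. Suppose that for every finitely generated free abelian subgroup A of Q there is a finite-index subgroup A' of A such that N_Q[A'] = N_Q(A'). Then for every finitely generated free abelian subgroup H of G there is a subgroup L of G such that L is commensurable with H and N_G[L] = N_G(L). -/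
/-!
The image `θ(H)` is finitely generated abelian, so it contains a free subgroup `A` of finite index,
and the hypothesis on `Q` gives `A' ≤ A`. Take for `L` the isolator of `H` in `θ⁻¹(A')`: the
elements of `θ⁻¹(A')` with a nonzero power in `H`. Two such elements `x, y` commute: their
commutator `c` lies in the central, torsion-free kernel, and `c ^ (a * m) = ⁅x ^ a, y ^ m⁆ = 1`
once `x ^ a, y ^ m ∈ H`. So `L` is abelian, finitely generated (by `H ∩ θ⁻¹(A')` and a subgroup of
`ℤ^b`) and commensurable with `H`. If `g` commensurates `L`, then `θ g` commensurates `θ(L) = A'`,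
hence normalizes it, so `gLg⁻¹ ≤ θ⁻¹(A')`; every element of `gLg⁻¹` has a power in `L`, and `L` is
isolated in `θ⁻¹(A')`, so `gLg⁻¹ ≤ L`.
-/

open Subgroup ConjAct
open scoped Pointwise commutatorElement IsMulCommutative

section

variable {G Q : Type*} [Group G] [Group Q]

theorem commutatorElement_pow_right_of_mem_center {x y : G} (h : ⁅x, y⁆ ∈ center G) (m : ℕ) :
    ⁅x, y ^ m⁆ = ⁅x, y⁆ ^ m := by
  induction m with
  | zero => simp [commutatorElement_def]
  | succ m ih =>
    calc ⁅x, y ^ (m + 1)⁆ = ⁅x, y ^ m⁆ * (y ^ m * ⁅x, y⁆ * (y ^ m)⁻¹) := by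
          simp only [commutatorElement_def]; group
      _ = ⁅x, y⁆ ^ (m + 1) := by
          rw [mem_center_iff.mp h (y ^ m), mul_inv_cancel_right, ih, pow_succ]

theorem commutatorElement_pow_left_of_mem_center {x y : G} (h : ⁅x, y⁆ ∈ center G) (a : ℕ) :
    ⁅x ^ a, y⁆ = ⁅x, y⁆ ^ a := by
  have h' : ⁅y, x⁆ ∈ center G := commutatorElement_inv x y ▸ inv_mem h
  rw [← commutatorElement_inv, commutatorElement_pow_right_of_mem_center h', ← inv_pow,
    commutatorElement_inv]

theorem commutatorElement_pow_pow_of_mem_center {x y : G} (h : ⁅x, y⁆ ∈ center G) (a m : ℕ) :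
    ⁅x ^ a, y ^ m⁆ = ⁅x, y⁆ ^ (a * m) := by
  have h' : ⁅x, y ^ m⁆ ∈ center G := commutatorElement_pow_right_of_mem_center h m ▸ pow_mem h m
  rw [commutatorElement_pow_left_of_mem_center h', commutatorElement_pow_right_of_mem_center h,
    ← pow_mul, mul_comm]

theorem MulEquiv.isMulCommutative {M N : Type*} [Mul M] [CommMagma N] (e : M ≃* N) :
    IsMulCommutative M :=
  .of_comm fun a b ↦ e.injective <| by rw [map_mul, map_mul, mul_comm]

theorem Group.FG.of_mulEquiv {M N : Type*} [Group M] [Group N] [Group.FG N] (e : M ≃* N) :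
    Group.FG M :=
  Group.fg_of_surjective (f := e.symm.toMonoidHom) e.symm.surjective

theorem CommGroup.exists_finiteIndex_mulEquiv_free (M : Type*) [CommGroup M] [Group.FG M] :
    ∃ (N : Subgroup M) (k : ℕ), N.FiniteIndex ∧ Nonempty (N ≃* Multiplicative (Fin k → ℤ)) := by
  obtain ⟨ι, j, _, _, p, hp, e, ⟨f⟩⟩ := CommGroup.equiv_free_prod_prod_multiplicative_zmod M
  have : ∀ i, NeZero (p i ^ e i) := fun i ↦ ⟨pow_ne_zero _ (hp i).ne_zero⟩
  let F : Subgroup ((j → Multiplicative ℤ) × ((i : ι) → Multiplicative (ZMod (p i ^ e i)))) :=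
    (⊤ : Subgroup _).prod ⊥
  refine ⟨F.map (f.symm : _ →* M), Fintype.card j, ⟨?_⟩, ⟨?_⟩⟩
  · rw [index_map_equiv, index_prod, index_top, index_bot, one_mul]
    exact Nat.card_ne_zero.mpr ⟨inferInstance, inferInstance⟩
  · exact (f.symm.subgroupMap F).symm.trans <| (prodEquiv _ _).trans <|
      MulEquiv.prodUnique.trans <| topEquiv.trans <|
        (MulEquiv.arrowCongr (Fintype.equivFin j) (.refl _)).trans
          (MulEquiv.funMultiplicative _ ℤ).symm

namespace Subgroup

theorem fg_of_le_of_isMulCommutative {N W : Subgroup G} [IsMulCommutative W] [Group.FG W]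
    (h : N ≤ W) : Group.FG N := by
  have : IsNoetherian ℤ (Additive W) := isNoetherian_of_isNoetherianRing_of_finite ℤ _
  have hfg := IsNoetherian.noetherian (AddSubgroup.toIntSubmodule (N.subgroupOf W).toAddSubgroup)
  rw [Submodule.fg_iff_addSubgroup_fg, AddSubgroup.toIntSubmodule_toAddSubgroup, ← fg_iff_add_fg,
    ← Group.fg_iff_subgroup_fg] at hfg
  exact Group.fg_of_surjective (f := (subgroupOfEquivOfLe h).toMonoidHom)
    (subgroupOfEquivOfLe h).surjective

theorem relIndex_ne_zero_of_forall_pow_mem {K L : Subgroup G} [IsMulCommutative L]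
    [Group.FG L] (h : ∀ x ∈ L, ∃ n ≠ 0, x ^ n ∈ K) : K.relIndex L ≠ 0 := by
  have : Finite (L ⧸ K.subgroupOf L) := by
    refine CommGroup.finite_of_fg_isMulTorsion _ fun q ↦ ?_
    induction q using QuotientGroup.induction_on with
    | H x =>
      obtain ⟨n, hn, hxn⟩ := h x x.2
      refine isOfFinOrder_iff_pow_eq_one.mpr ⟨n, Nat.pos_of_ne_zero hn, ?_⟩
      rw [← QuotientGroup.mk_pow, QuotientGroup.eq_one_iff]
      exact hxn
  exact index_ne_zero_of_finite

theorem exists_le_relIndex_ne_zero_mulEquiv_free (M : Subgroup G) [IsMulCommutative M]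
    [Group.FG M] :
    ∃ A : Subgroup G, A ≤ M ∧ A.relIndex M ≠ 0 ∧
      ∃ k : ℕ, Nonempty (A ≃* Multiplicative (Fin k → ℤ)) := by
  obtain ⟨N, k, hN, ⟨e⟩⟩ := CommGroup.exists_finiteIndex_mulEquiv_free M
  refine ⟨N.map M.subtype, map_subtype_le N, ?_, k,
    ⟨(N.equivMapOfInjective _ M.subtype_injective).symm.trans e⟩⟩
  rw [relIndex, subgroupOf, comap_map_eq_self_of_injective M.subtype_injective]
  exact hN.index_ne_zero

theorem map_toConjAct_smul (f : G →* Q) (g : G) (L : Subgroup G) :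
    (toConjAct g • L).map f = toConjAct (f g) • L.map f := by
  ext y
  simp only [mem_map, mem_pointwise_smul_iff_inv_smul_mem, ← toConjAct_inv, toConjAct_smul]
  constructor
  · rintro ⟨x, hx, rfl⟩
    exact ⟨_, hx, by simp⟩
  · rintro ⟨x, hx, hxy⟩
    exact ⟨g * x * g⁻¹, by simpa [mul_assoc] using hx, by simp [hxy, mul_assoc]⟩

theorem toConjAct_smul_eq_self_of_mem_normalizer {L : Subgroup G} {g : G}
    (hg : g ∈ normalizer (L : Set G)) : toConjAct g • L = L := by
  ext x
  rw [mem_pointwise_smul_iff_inv_smul_mem, ← toConjAct_inv, toConjAct_smul, inv_inv,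
    ← mem_normalizer_iff''.mp hg]

theorem relIndex_map_ne_zero (f : G →* Q) {H K : Subgroup G} (h : H.relIndex K ≠ 0) :
    (H.map f).relIndex (K.map f) ≠ 0 := by
  rw [← relIndex_comap]
  exact fun h0 ↦ h (relIndex_eq_zero_of_le_left (le_comap_map f H) h0)

namespace Commensurable

theorem map (f : G →* Q) {H K : Subgroup G} (h : Commensurable H K) :
    Commensurable (H.map f) (K.map f) :=
  ⟨relIndex_map_ne_zero f h.1, relIndex_map_ne_zero f h.2⟩

theorem map_mem_commensurator (f : G →* Q) {L : Subgroup G} {g : G}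
    (hg : g ∈ commensurator L) : f g ∈ commensurator (L.map f) := by
  rw [commensurator_mem_iff, ← map_toConjAct_smul]
  exact hg.map f

theorem normalizer_le_commensurator (L : Subgroup G) :
    normalizer (L : Set G) ≤ commensurator L := fun g hg ↦ by
  rw [commensurator_mem_iff, toConjAct_smul_eq_self_of_mem_normalizer hg]

theorem commensurator_le_normalizer_of_isolated {L P : Subgroup G}
    (hiso : ∀ x ∈ P, ∀ n ≠ 0, x ^ n ∈ L → x ∈ L)
    (hP : ∀ g ∈ commensurator L, toConjAct g • L ≤ P) :
    commensurator L ≤ normalizer (L : Set G) := by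
  have hconj : ∀ g ∈ commensurator L, ∀ x ∈ L, g * x * g⁻¹ ∈ L := by
    intro g hg x hx
    have hgx : g * x * g⁻¹ ∈ toConjAct g • L := by
      rw [← toConjAct_smul]; exact smul_mem_pointwise_smul _ _ _ hx
    obtain ⟨n, hn, -, hxn⟩ := exists_pow_mem_of_relIndex_ne_zero hg.2 hgx
    exact hiso _ (hP g hg hgx) n hn.ne' hxn.1
  intro g hg
  refine mem_normalizer_iff.mpr fun x ↦ ⟨hconj g hg x, fun hx ↦ ?_⟩
  simpa [mul_assoc] using hconj g⁻¹ (inv_mem hg) _ hx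

end Commensurable

/-- The isolator of `H` in `P`; its carrier is closed under multiplication only when elements of
`P` with a power in `H` commute pairwise, which `hcomm` provides. -/
def isolator (P H : Subgroup G)
    (hcomm : ∀ x ∈ P, ∀ y ∈ P, ∀ a m : ℕ, a ≠ 0 → m ≠ 0 → x ^ a ∈ H → y ^ m ∈ H → Commute x y) :
    Subgroup G where
  carrier := {x | x ∈ P ∧ ∃ n ≠ 0, x ^ n ∈ H}
  one_mem' := ⟨P.one_mem, 1, one_ne_zero, by simp⟩
  inv_mem' := fun ⟨hx, n, hn, hxn⟩ ↦ ⟨inv_mem hx, n, hn, by simpa using inv_mem hxn⟩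
  mul_mem' := fun {x y} ⟨hx, a, ha, hxa⟩ ⟨hy, m, hm, hym⟩ ↦
    ⟨mul_mem hx hy, a * m, Nat.mul_ne_zero ha hm, by
      rw [(hcomm x hx y hy a m ha hm hxa hym).mul_pow, pow_mul, mul_comm a, pow_mul]
      exact mul_mem (pow_mem hxa m) (pow_mem hym a)⟩

section isolator

variable {P H : Subgroup G}
  {hcomm : ∀ x ∈ P, ∀ y ∈ P, ∀ a m : ℕ, a ≠ 0 → m ≠ 0 → x ^ a ∈ H → y ^ m ∈ H → Commute x y}

theorem isolator_le : isolator P H hcomm ≤ P := fun _ hx ↦ hx.1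

theorem inf_le_isolator : H ⊓ P ≤ isolator P H hcomm :=
  fun x hx ↦ ⟨hx.2, 1, one_ne_zero, by rw [pow_one]; exact hx.1⟩

theorem mem_isolator_of_pow_mem {x : G} (hx : x ∈ P) {n : ℕ} (hn : n ≠ 0)
    (hxn : x ^ n ∈ isolator P H hcomm) : x ∈ isolator P H hcomm := by
  obtain ⟨-, m, hm, hxm⟩ := hxn
  exact ⟨hx, n * m, Nat.mul_ne_zero hn hm, by rwa [pow_mul]⟩

instance : IsMulCommutative (isolator P H hcomm) :=
  .of_setLike_mul_comm fun x ⟨hx, a, ha, hxa⟩ y ⟨hy, m, hm, hym⟩ ↦ hcomm x hx y hy a m ha hm hxa hym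

theorem commensurable_isolator [Group.FG (isolator P H hcomm)] (hP : P.relIndex H ≠ 0) :
    Commensurable (isolator P H hcomm) H := by
  refine ⟨fun h0 ↦ hP ?_, relIndex_ne_zero_of_forall_pow_mem fun x hx ↦ hx.2⟩
  rw [← inf_relIndex_right, inf_comm]
  exact relIndex_eq_zero_of_le_left inf_le_isolator h0

end isolator

end Subgroup

section CentralExtension

variable {θ : G →* Q}

theorem MonoidHom.commute_of_commute_pow (hcentral : θ.ker ≤ center G) [IsMulTorsionFree θ.ker]
    {x y : G} (hxy : Commute (θ x) (θ y)) {a m : ℕ} (ha : a ≠ 0) (hm : m ≠ 0)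
    (hpow : Commute (x ^ a) (y ^ m)) : Commute x y := by
  have hker : ⁅x, y⁆ ∈ θ.ker := by
    rw [MonoidHom.mem_ker, map_commutatorElement, commutatorElement_eq_one_iff_commute]
    exact hxy
  have hpow_one : (⟨⁅x, y⁆, hker⟩ : θ.ker) ^ (a * m) = 1 := by
    ext
    rw [Subgroup.coe_pow, ← commutatorElement_pow_pow_of_mem_center (hcentral hker),
      commutatorElement_eq_one_iff_commute.mpr hpow, Subgroup.coe_one]
  rw [← commutatorElement_eq_one_iff_commute]
  simpa using (pow_eq_one_iff_left (Nat.mul_ne_zero ha hm)).mp hpow_one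

namespace Subgroup

theorem commute_of_pow_mem_of_mem_comap (hcentral : θ.ker ≤ center G) [IsMulTorsionFree θ.ker]
    {H : Subgroup G} [IsMulCommutative H] {A : Subgroup Q} [IsMulCommutative A] :
    ∀ x ∈ A.comap θ, ∀ y ∈ A.comap θ, ∀ a m : ℕ, a ≠ 0 → m ≠ 0 → x ^ a ∈ H → y ^ m ∈ H →
      Commute x y :=
  fun _ hx _ hy _ _ ha hm hxa hym ↦
    θ.commute_of_commute_pow hcentral (setLike_mul_comm (mem_comap.mp hx) (mem_comap.mp hy)) ha hm
      (setLike_mul_comm hxa hym)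

variable {H : Subgroup G} {A : Subgroup Q}
  {hcomm : ∀ x ∈ A.comap θ, ∀ y ∈ A.comap θ, ∀ a m : ℕ, a ≠ 0 → m ≠ 0 → x ^ a ∈ H → y ^ m ∈ H →
    Commute x y}

theorem map_isolator_comap (hAH : A ≤ H.map θ) : (isolator (A.comap θ) H hcomm).map θ = A := by
  refine le_antisymm (map_le_iff_le_comap.mpr isolator_le) fun q hq ↦ ?_
  obtain ⟨x, hx, rfl⟩ := hAH hq
  exact ⟨x, inf_le_isolator ⟨hx, hq⟩, rfl⟩

theorem isolator_comap_eq_sup (hAH : A ≤ H.map θ) :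
    isolator (A.comap θ) H hcomm = H ⊓ A.comap θ ⊔ isolator (A.comap θ) H hcomm ⊓ θ.ker := by
  refine le_antisymm (fun x hx ↦ ?_) (sup_le inf_le_isolator inf_le_left)
  have hxA : θ x ∈ A := (isolator_le hx : x ∈ A.comap θ)
  obtain ⟨h, hh, hhx⟩ := hAH hxA
  have hhA : h ∈ H ⊓ A.comap θ := ⟨hh, show θ h ∈ A from hhx ▸ hxA⟩
  have hker : h⁻¹ * x ∈ isolator (A.comap θ) H hcomm ⊓ θ.ker :=
    mem_inf.mpr ⟨mul_mem (inv_mem (inf_le_isolator hhA)) hx, by simp [hhx]⟩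
  simpa only [mul_inv_cancel_left] using mul_mem_sup hhA hker

theorem fg_isolator_comap [IsMulCommutative H] [Group.FG H] [IsMulCommutative θ.ker]
    [Group.FG θ.ker] (hAH : A ≤ H.map θ) : Group.FG (isolator (A.comap θ) H hcomm) := by
  have hfg₁ := fg_of_le_of_isMulCommutative (inf_le_left : H ⊓ A.comap θ ≤ H)
  have hfg₂ :=
    fg_of_le_of_isMulCommutative (inf_le_right : isolator (A.comap θ) H hcomm ⊓ θ.ker ≤ θ.ker)
  rw [Group.fg_iff_subgroup_fg] at hfg₁ hfg₂ ⊢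
  rw [isolator_comap_eq_sup hAH]
  exact hfg₁.sup hfg₂

theorem toConjAct_smul_isolator_le_comap (hAH : A ≤ H.map θ)
    (hA : Commensurable.commensurator A = normalizer (A : Set Q)) {g : G}
    (hg : g ∈ Commensurable.commensurator (isolator (A.comap θ) H hcomm)) :
    toConjAct g • isolator (A.comap θ) H hcomm ≤ A.comap θ := by
  have hθg := Commensurable.map_mem_commensurator θ hg
  rw [map_isolator_comap hAH, hA] at hθg
  rw [← map_le_iff_le_comap, map_toConjAct_smul, map_isolator_comap hAH,
    toConjAct_smul_eq_self_of_mem_normalizer hθg]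

end Subgroup

theorem exists_commensurable_commensurator_eq_normalizer (hcentral : θ.ker ≤ center G)
    [IsMulTorsionFree θ.ker] [IsMulCommutative θ.ker] [Group.FG θ.ker]
    {H : Subgroup G} [IsMulCommutative H] [Group.FG H] {A : Subgroup Q} (hAH : A ≤ H.map θ)
    (hA_fin : A.relIndex (H.map θ) ≠ 0)
    (hA : Commensurable.commensurator A = normalizer (A : Set Q)) :
    ∃ L : Subgroup G, Commensurable L H ∧
      Commensurable.commensurator L = normalizer (L : Set G) := by
  have : IsMulCommutative A :=
    .of_setLike_mul_comm fun _ ha _ hb ↦ setLike_mul_comm (hAH ha) (hAH hb)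
  let L := isolator (A.comap θ) H (commute_of_pow_mem_of_mem_comap hcentral)
  have : Group.FG L := fg_isolator_comap hAH
  refine ⟨L, commensurable_isolator (by rwa [relIndex_comap]), le_antisymm ?_
    (Commensurable.normalizer_le_commensurator L)⟩
  exact Commensurable.commensurator_le_normalizer_of_isolated
    (fun _ hx _ hn ↦ mem_isolator_of_pow_mem hx hn)
    (fun _ ↦ toConjAct_smul_isolator_le_comap hAH hA)

end CentralExtension

end

theorem commensurator_eq_normalizer_of_central_extension_general
    {G Q : Type*} [Group G] [Group Q] (b : ℕ)
    (θ : G →* Q)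
    (hcentral : θ.ker ≤ Subgroup.center G)
    (hker : Nonempty (θ.ker ≃* Multiplicative (Fin b → ℤ)))
    (hQ : ∀ A : Subgroup Q, (∃ n : ℕ, Nonempty (A ≃* Multiplicative (Fin n → ℤ))) →
      ∃ A' : Subgroup Q, A' ≤ A ∧ (A'.subgroupOf A).FiniteIndex ∧
        Subgroup.Commensurable.commensurator A' = Subgroup.normalizer (A' : Set Q)) :
    ∀ H : Subgroup G, (∃ n : ℕ, Nonempty (H ≃* Multiplicative (Fin n → ℤ))) →
      ∃ L : Subgroup G, Subgroup.Commensurable L H ∧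
        Subgroup.Commensurable.commensurator L = Subgroup.normalizer (L : Set G) := by
  rintro H ⟨n, ⟨eH⟩⟩
  obtain ⟨eK⟩ := hker
  have := eH.isMulCommutative
  have := Group.FG.of_mulEquiv eH
  have := eK.isMulCommutative
  have := Group.FG.of_mulEquiv eK
  have : IsMulTorsionFree θ.ker := eK.injective.isMulTorsionFree eK.toMonoidHom
  have : Group.FG (H.map θ) := Group.fg_of_surjective (θ.subgroupMap_surjective H)
  obtain ⟨A, hAH, hA_fin, hA_free⟩ := (H.map θ).exists_le_relIndex_ne_zero_mulEquiv_free
  obtain ⟨A', hA'A, hA'_fin, hA'⟩ := hQ A hA_free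
  exact exists_commensurable_commensurator_eq_normalizer hcentral (hA'A.trans hAH)
    (relIndex_ne_zero_trans hA'_fin.index_ne_zero hA_fin) hA'

theorem commensurator_eq_normalizer_of_central_extension
    {G Q : Type*} [Group G] [Group Q] (b : ℕ) (hb : 1 ≤ b)
    (θ : G →* Q) (hsurj : Function.Surjective θ)
    (hcentral : θ.ker ≤ Subgroup.center G)
    (hker : Nonempty (θ.ker ≃* Multiplicative (Fin b → ℤ)))
    (hQ : ∀ A : Subgroup Q, (∃ n : ℕ, Nonempty (A ≃* Multiplicative (Fin n → ℤ))) →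
      ∃ A' : Subgroup Q, A' ≤ A ∧ (A'.subgroupOf A).FiniteIndex ∧
        Subgroup.Commensurable.commensurator A' = Subgroup.normalizer (A' : Set Q)) :
    ∀ H : Subgroup G, (∃ n : ℕ, Nonempty (H ≃* Multiplicative (Fin n → ℤ))) →
      ∃ L : Subgroup G, Subgroup.Commensurable L H ∧
        Subgroup.Commensurable.commensurator L = Subgroup.normalizer (L : Set G) :=
  commensurator_eq_normalizer_of_central_extension_general b θ hcentral hker hQ
end
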